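/- arXiv:0903.0190 — 7 statements merged into one kernel-verified Lean document; each statement's English description precedes it below -/
import Mathlib

section
/- The R-matrix is unitary in the sense that R₁₂(λ) R₂₁(-λ) = (cos² λ) · (1 ⊗ 1), where R₂₁(μ) = P₁₂ R₁₂(μ) P₁₂. -/
open TensorProduct

noncomputable def flipMap (V : Type*) [AddCommGroup V] [Module ℂ V] :
    Module.End ℂ (V ⊗[ℂ] V) := (TensorProduct.comm ℂ V V).toLinearMap

noncomputable def SigmaOp {V : Type*} [AddCommGroup V] [Module ℂ V]
    (π : Module.End ℂ V) : Module.End ℂ (V ⊗[ℂ] V) :=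
  TensorProduct.map π (1 - π) + TensorProduct.map (1 - π) π

noncomputable def Rmat {V : Type*} [AddCommGroup V] [Module ℂ V]
    (π : Module.End ℂ V) (lam : ℝ) : Module.End ℂ (V ⊗[ℂ] V) :=
  SigmaOp π * flipMap V + (Real.sin lam : ℂ) • SigmaOp π
    + (Real.cos lam : ℂ) • ((1 - SigmaOp π) * flipMap V)

lemma flip_sq (V : Type*) [AddCommGroup V] [Module ℂ V] :
    flipMap V * flipMap V = 1 := by
  apply TensorProduct.ext'
  intro x y
  simp [flipMap, Module.End.mul_apply]

lemma sigma_flip {V : Type*} [AddCommGroup V] [Module ℂ V] (π : Module.End ℂ V) :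
    SigmaOp π * flipMap V = flipMap V * SigmaOp π := by
  apply TensorProduct.ext'
  intro x y
  simp [SigmaOp, flipMap, Module.End.mul_apply]
  abel

lemma sigma_sq {V : Type*} [AddCommGroup V] [Module ℂ V] (π : Module.End ℂ V)
    (hπ : π * π = π) : SigmaOp π * SigmaOp π = SigmaOp π := by
  have h1 : π * (1 - π) = 0 := by rw [mul_sub, mul_one, hπ, sub_self]
  have h2 : (1 - π) * π = 0 := by rw [sub_mul, one_mul, hπ, sub_self]
  have h3 : (1 - π) * (1 - π) = 1 - π := by rw [mul_sub, mul_one, h2, sub_zero]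
  simp only [SigmaOp, add_mul, mul_add, ← TensorProduct.map_mul, hπ, h1, h2, h3]
  simp

lemma key {A : Type*} [Ring A] [Algebra ℂ A] (S P : A)
    (hS : S * S = S) (hP : P * P = 1) (hc : S * P = P * S) (s c : ℂ)
    (h : s ^ 2 + c ^ 2 = 1) :
    (S*P + s•S + c•((1-S)*P)) * (P * (S*P + (-s)•S + c•((1-S)*P)) * P)
      = c ^ 2 • (1 : A) := by
  have r1 : ∀ x : A, P*(P*x) = x := fun x => by rw [← mul_assoc, hP, one_mul]
  have r2 : ∀ x : A, S*(S*x) = S*x := fun x => by rw [← mul_assoc, hS]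
  have r3 : ∀ x : A, P*(S*x) = S*(P*x) := fun x => by rw [← mul_assoc, ← hc, mul_assoc]
  simp only [mul_add, add_mul, sub_mul, mul_sub, one_mul, mul_one, smul_mul_assoc,
    mul_smul_comm, smul_smul, mul_assoc, r1, r2, r3, hP, hS, ← hc]
  match_scalars <;> first | ring1 | linear_combination -h

theorem R_unitarity (V : Type*) [AddCommGroup V] [Module ℂ V]
    [FiniteDimensional ℂ V] (π : Module.End ℂ V) (hπ : π * π = π) (lam : ℝ) :
    Rmat π lam * (flipMap V * Rmat π (-lam) * flipMap V)
      = ((Real.cos lam : ℂ)^2) • (1 : Module.End ℂ (V ⊗[ℂ] V)) := by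
  have h : ((Real.sin lam : ℂ))^2 + ((Real.cos lam : ℂ))^2 = 1 := by
    exact_mod_cast congrArg (Complex.ofReal) (Real.sin_sq_add_cos_sq lam)
  have := key (SigmaOp π) (flipMap V) (sigma_sq π hπ) (flip_sq V) (sigma_flip π)
    (Real.sin lam : ℂ) (Real.cos lam : ℂ) h
  simp only [Rmat, Real.sin_neg, Real.cos_neg, Complex.ofReal_neg]
  exact this
end

section
/- The R-matrix satisfies the exchange relation R₁₂(λ) R₂₁(μ) = R₁₂(μ) R₂₁(λ) for all λ, μ ∈ ℝ. -/
open TensorProduct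

lemma sigma_flip_comm {V : Type*} [AddCommGroup V] [Module ℂ V]
    (π : Module.End ℂ V) : Commute (SigmaOp π) (flipMap V) := by
  unfold Commute SemiconjBy
  apply TensorProduct.ext'
  intro x y
  simp [SigmaOp, flipMap, Module.End.mul_apply, add_comm]

theorem R_exchange (V : Type*) [AddCommGroup V] [Module ℂ V]
    [FiniteDimensional ℂ V] (π : Module.End ℂ V) (hπ : π * π = π) (lam mu : ℝ) :
    Rmat π lam * (flipMap V * Rmat π mu * flipMap V)
      = Rmat π mu * (flipMap V * Rmat π lam * flipMap V) := by
  have hAB := sigma_flip_comm π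
  have hA : ∀ t : ℝ, Commute (SigmaOp π) (Rmat π t) := by
    intro t
    refine (((Commute.refl _).mul_right hAB).add_right ?_).add_right ?_
    · exact ((Commute.refl _).smul_right _)
    · exact (((Commute.one_right _).sub_right (Commute.refl _)).mul_right hAB).smul_right _
  have hP : ∀ t : ℝ, Commute (flipMap V) (Rmat π t) := by
    intro t
    refine ((hAB.symm.mul_right (Commute.refl _)).add_right ?_).add_right ?_
    · exact hAB.symm.smul_right _
    · exact (((Commute.one_right _).sub_right hAB.symm).mul_right (Commute.refl _)).smul_right _
  have hRR : Commute (Rmat π lam) (Rmat π mu) := by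
    refine (((hA mu).mul_left (hP mu)).add_left ?_).add_left ?_
    · exact (hA mu).smul_left _
    · exact (((Commute.one_left _).sub_left (hA mu)).mul_left (hP mu)).smul_left _
  have key : ∀ t : ℝ, flipMap V * Rmat π t * flipMap V = Rmat π t := by
    intro t
    rw [(hP t).eq, mul_assoc, flip_sq, mul_one]
  rw [key, key, hRR.eq]
end

section
/- The R-matrix satisfies the Yang–Baxter equation: R₁₂(λ₁-λ₂) R₁₃(λ₁-λ₃) R₂₃(λ₂-λ₃) = R₂₃(λ₂-λ₃) R₁₃(λ₁-λ₃) R₁₂(λ₁-λ₂), as operators on V ⊗ V ⊗ V. -/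
open TensorProduct

noncomputable def op12 {V : Type*} [AddCommGroup V] [Module ℂ V]
    (A : Module.End ℂ (V ⊗[ℂ] V)) : Module.End ℂ (V ⊗[ℂ] (V ⊗[ℂ] V)) :=
  (TensorProduct.assoc ℂ V V V).toLinearMap ∘ₗ
    TensorProduct.map A LinearMap.id ∘ₗ
      (TensorProduct.assoc ℂ V V V).symm.toLinearMap

noncomputable def op23 {V : Type*} [AddCommGroup V] [Module ℂ V]
    (A : Module.End ℂ (V ⊗[ℂ] V)) : Module.End ℂ (V ⊗[ℂ] (V ⊗[ℂ] V)) :=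
  TensorProduct.map LinearMap.id A

noncomputable def op13 {V : Type*} [AddCommGroup V] [Module ℂ V]
    (A : Module.End ℂ (V ⊗[ℂ] V)) : Module.End ℂ (V ⊗[ℂ] (V ⊗[ℂ] V)) :=
  op23 (flipMap V) * op12 A * op23 (flipMap V)

section YBHelpers

variable {V : Type*} [AddCommGroup V] [Module ℂ V] (π : Module.End ℂ V)

lemma flipMap_apply (x y : V) : flipMap V (x ⊗ₜ[ℂ] y) = y ⊗ₜ[ℂ] x := rfl

lemma SigmaOp_apply (x y : V) :
    SigmaOp π (x ⊗ₜ[ℂ] y) = π x ⊗ₜ[ℂ] (y - π y) + (x - π x) ⊗ₜ[ℂ] π y := by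
  simp [SigmaOp, LinearMap.sub_apply]

lemma Rmat_same (l : ℝ) (x y : V) (hx : π x = x) (hy : π y = y) :
    Rmat π l (x ⊗ₜ[ℂ] y) = (Real.cos l : ℂ) • (y ⊗ₜ[ℂ] x) := by
  simp [Rmat, Module.End.mul_apply, SigmaOp_apply, flipMap_apply, hx, hy, LinearMap.sub_apply]

lemma Rmat_same' (l : ℝ) (x y : V) (hx : π x = 0) (hy : π y = 0) :
    Rmat π l (x ⊗ₜ[ℂ] y) = (Real.cos l : ℂ) • (y ⊗ₜ[ℂ] x) := by
  simp [Rmat, Module.End.mul_apply, SigmaOp_apply, flipMap_apply, hx, hy, LinearMap.sub_apply]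

lemma Rmat_diff (l : ℝ) (x y : V) (hx : π x = x) (hy : π y = 0) :
    Rmat π l (x ⊗ₜ[ℂ] y) = y ⊗ₜ[ℂ] x + (Real.sin l : ℂ) • (x ⊗ₜ[ℂ] y) := by
  simp [Rmat, Module.End.mul_apply, SigmaOp_apply, flipMap_apply, hx, hy, LinearMap.sub_apply]

lemma Rmat_diff' (l : ℝ) (x y : V) (hx : π x = 0) (hy : π y = y) :
    Rmat π l (x ⊗ₜ[ℂ] y) = y ⊗ₜ[ℂ] x + (Real.sin l : ℂ) • (x ⊗ₜ[ℂ] y) := by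
  simp [Rmat, Module.End.mul_apply, SigmaOp_apply, flipMap_apply, hx, hy, LinearMap.sub_apply]

lemma op12_apply (A : Module.End ℂ (V ⊗[ℂ] V)) (x y z : V) :
    op12 A (x ⊗ₜ[ℂ] (y ⊗ₜ[ℂ] z)) =
      (TensorProduct.assoc ℂ V V V) (A (x ⊗ₜ[ℂ] y) ⊗ₜ[ℂ] z) := by
  simp [op12]

lemma op23_apply (A : Module.End ℂ (V ⊗[ℂ] V)) (x y z : V) :
    op23 A (x ⊗ₜ[ℂ] (y ⊗ₜ[ℂ] z)) = x ⊗ₜ[ℂ] A (y ⊗ₜ[ℂ] z) := by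
  simp [op23]

lemma op13_apply (A : Module.End ℂ (V ⊗[ℂ] V)) (x y z : V) :
    op13 A (x ⊗ₜ[ℂ] (y ⊗ₜ[ℂ] z)) =
      op23 (flipMap V) ((TensorProduct.assoc ℂ V V V) (A (x ⊗ₜ[ℂ] z) ⊗ₜ[ℂ] y)) := by
  simp [op13, Module.End.mul_apply, op23_apply, flipMap, op12_apply]

lemma yb_pure (l1 l2 l3 : ℝ) (x y z : V)
    (hx : π x = x ∨ π x = 0) (hy : π y = y ∨ π y = 0) (hz : π z = z ∨ π z = 0) :
    (op12 (Rmat π (l1 - l2)) * op13 (Rmat π (l1 - l3)) * op23 (Rmat π (l2 - l3)))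
        (x ⊗ₜ[ℂ] (y ⊗ₜ[ℂ] z))
      = (op23 (Rmat π (l2 - l3)) * op13 (Rmat π (l1 - l3)) * op12 (Rmat π (l1 - l2)))
        (x ⊗ₜ[ℂ] (y ⊗ₜ[ℂ] z)) := by
  have h13 : l1 - l3 = (l1 - l2) + (l2 - l3) := by ring
  rw [h13]
  rcases hx with hx | hx <;> rcases hy with hy | hy <;> rcases hz with hz | hz <;>
  · simp only [Module.End.mul_apply, op23_apply, op12_apply, op13_apply,
      Rmat_same π, Rmat_same' π, Rmat_diff π, Rmat_diff' π, hx, hy, hz,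
      map_add, map_smul, LinearMap.map_smul_of_tower, add_tmul, tmul_add, smul_tmul, tmul_smul,
      assoc_tmul, flipMap_apply, Real.sin_add, Real.cos_add]
    push_cast
    match_scalars <;> ring_nf <;> simp only [Complex.sin_sq] <;> ring_nf

end YBHelpers

theorem R_yang_baxter (V : Type*) [AddCommGroup V] [Module ℂ V]
    [FiniteDimensional ℂ V] (π : Module.End ℂ V) (hπ : π * π = π)
    (l1 l2 l3 : ℝ) :
    op12 (Rmat π (l1 - l2)) * op13 (Rmat π (l1 - l3)) * op23 (Rmat π (l2 - l3))
      = op23 (Rmat π (l2 - l3)) * op13 (Rmat π (l1 - l3)) * op12 (Rmat π (l1 - l2)) := by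
  have hproj : ∀ v : V, π (π v) = π v := fun v => LinearMap.congr_fun hπ v
  have hcond : ∀ v : V, (π (π v) = π v ∨ π (π v) = 0) ∧
      (π (v - π v) = v - π v ∨ π (v - π v) = 0) := fun v =>
    ⟨Or.inl (hproj v), Or.inr (by simp [map_sub, hproj v])⟩
  have key2 : ∀ x y z : V, (π x = x ∨ π x = 0) → (π y = y ∨ π y = 0) →
      (op12 (Rmat π (l1 - l2)) * op13 (Rmat π (l1 - l3)) * op23 (Rmat π (l2 - l3)))
          (x ⊗ₜ[ℂ] (y ⊗ₜ[ℂ] z))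
        = (op23 (Rmat π (l2 - l3)) * op13 (Rmat π (l1 - l3)) * op12 (Rmat π (l1 - l2)))
          (x ⊗ₜ[ℂ] (y ⊗ₜ[ℂ] z)) := by
    intro x y z hx hy
    have hsplit : x ⊗ₜ[ℂ] (y ⊗ₜ[ℂ] z)
        = x ⊗ₜ[ℂ] (y ⊗ₜ[ℂ] π z) + x ⊗ₜ[ℂ] (y ⊗ₜ[ℂ] (z - π z)) := by
      rw [← tmul_add, ← tmul_add, add_sub_cancel]
    rw [hsplit, map_add, map_add,
      yb_pure π l1 l2 l3 x y (π z) hx hy ((hcond z).1),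
      yb_pure π l1 l2 l3 x y (z - π z) hx hy ((hcond z).2)]
  have key1 : ∀ x y z : V, (π x = x ∨ π x = 0) →
      (op12 (Rmat π (l1 - l2)) * op13 (Rmat π (l1 - l3)) * op23 (Rmat π (l2 - l3)))
          (x ⊗ₜ[ℂ] (y ⊗ₜ[ℂ] z))
        = (op23 (Rmat π (l2 - l3)) * op13 (Rmat π (l1 - l3)) * op12 (Rmat π (l1 - l2)))
          (x ⊗ₜ[ℂ] (y ⊗ₜ[ℂ] z)) := by
    intro x y z hx
    have hsplit : x ⊗ₜ[ℂ] (y ⊗ₜ[ℂ] z)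
        = x ⊗ₜ[ℂ] (π y ⊗ₜ[ℂ] z) + x ⊗ₜ[ℂ] ((y - π y) ⊗ₜ[ℂ] z) := by
      rw [← tmul_add, ← add_tmul, add_sub_cancel]
    rw [hsplit, map_add, map_add,
      key2 x (π y) z hx ((hcond y).1), key2 x (y - π y) z hx ((hcond y).2)]
  have key0 : ∀ x y z : V,
      (op12 (Rmat π (l1 - l2)) * op13 (Rmat π (l1 - l3)) * op23 (Rmat π (l2 - l3)))
          (x ⊗ₜ[ℂ] (y ⊗ₜ[ℂ] z))
        = (op23 (Rmat π (l2 - l3)) * op13 (Rmat π (l1 - l3)) * op12 (Rmat π (l1 - l2)))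
          (x ⊗ₜ[ℂ] (y ⊗ₜ[ℂ] z)) := by
    intro x y z
    have hsplit : x ⊗ₜ[ℂ] (y ⊗ₜ[ℂ] z)
        = π x ⊗ₜ[ℂ] (y ⊗ₜ[ℂ] z) + (x - π x) ⊗ₜ[ℂ] (y ⊗ₜ[ℂ] z) := by
      rw [← add_tmul, add_sub_cancel]
    rw [hsplit, map_add, map_add,
      key1 (π x) y z ((hcond x).1), key1 (x - π x) y z ((hcond x).2)]
  apply LinearMap.ext
  intro t
  induction t using TensorProduct.induction_on with
  | zero => simp
  | tmul x w =>
    induction w using TensorProduct.induction_on with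
    | zero => simp
    | tmul y z => exact key0 x y z
    | add a b ha hb => rw [tmul_add, map_add, map_add, ha, hb]
  | add a b ha hb => rw [map_add, map_add, ha, hb]
end

section
/- The operators Σ_{ij} satisfy 2 Σ_{ij} Σ_{kj} = Σ_{ij} + Σ_{kj} - Σ_{ik} for all distinct i, j, k ∈ {1,2,3}. -/
open TensorProduct

noncomputable def ins {V : Type*} [AddCommGroup V] [Module ℂ V]
    (i : Fin 3) (A : Module.End ℂ V) : Module.End ℂ (V ⊗[ℂ] (V ⊗[ℂ] V)) :=
  match i with
  | 0 => TensorProduct.map A LinearMap.id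
  | 1 => TensorProduct.map LinearMap.id (TensorProduct.map A LinearMap.id)
  | 2 => TensorProduct.map LinearMap.id (TensorProduct.map LinearMap.id A)

noncomputable def SigmaIJ {V : Type*} [AddCommGroup V] [Module ℂ V]
    (π : Module.End ℂ V) (i j : Fin 3) : Module.End ℂ (V ⊗[ℂ] (V ⊗[ℂ] V)) :=
  ins i π * ins j (1 - π) + ins i (1 - π) * ins j π

lemma ins_mul {V : Type*} [AddCommGroup V] [Module ℂ V]
    (i : Fin 3) (A B : Module.End ℂ V) : ins i A * ins i B = ins i (A * B) := by
  fin_cases i <;>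
  simp [ins, Module.End.mul_eq_comp, ← TensorProduct.map_comp]

lemma ins_one {V : Type*} [AddCommGroup V] [Module ℂ V] (i : Fin 3) :
    ins (V := V) i 1 = 1 := by
  fin_cases i <;> ext x <;>
  simp [ins, Module.End.one_eq_id]

lemma ins_sub {V : Type*} [AddCommGroup V] [Module ℂ V] (i : Fin 3)
    (A B : Module.End ℂ V) : ins i (A - B) = ins i A - ins i B := by
  fin_cases i <;> ext x <;>
  simp [ins, TensorProduct.sub_tmul, TensorProduct.tmul_sub]

lemma ins_comm {V : Type*} [AddCommGroup V] [Module ℂ V] {i j : Fin 3}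
    (h : i ≠ j) (A B : Module.End ℂ V) : ins i A * ins j B = ins j B * ins i A := by
  fin_cases i <;> fin_cases j <;> simp_all <;>
  simp [ins, Module.End.mul_eq_comp, ← TensorProduct.map_comp]

lemma key_ring {R : Type*} [Ring R] (a b c : R) (hb : b*b = b) (hbc : b*c = c*b) :
    (a*(1-b)+(1-a)*b) * (c*(1-b)+(1-c)*b) + (a*(1-b)+(1-a)*b) * (c*(1-b)+(1-c)*b)
    = (a*(1-b)+(1-a)*b) + (c*(1-b)+(1-c)*b) - (a*(1-c)+(1-a)*c) := by
  have h1 : b * (c * b) = c * b := by rw [← mul_assoc, hbc, mul_assoc, hb]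
  have h2 : a * (b * c) = a * (c * b) := by rw [hbc]
  noncomm_ring [hb, hbc, h1, h2]

lemma SigmaIJ_eq {V : Type*} [AddCommGroup V] [Module ℂ V]
    (π : Module.End ℂ V) (i j : Fin 3) :
    SigmaIJ π i j = ins i π * (1 - ins j π) + (1 - ins i π) * ins j π := by
  simp [SigmaIJ, ins_sub, ins_one]

theorem sigma_ij_relation (V : Type*) [AddCommGroup V] [Module ℂ V]
    [FiniteDimensional ℂ V] (π : Module.End ℂ V) (hπ : π * π = π)
    (i j k : Fin 3) (hij : i ≠ j) (hjk : j ≠ k) (hik : i ≠ k) :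
    (2 : ℂ) • (SigmaIJ π i j * SigmaIJ π k j)
      = SigmaIJ π i j + SigmaIJ π k j - SigmaIJ π i k := by
  have hb : ins j π * ins j π = ins j π := by rw [ins_mul, hπ]
  have hbc : ins j π * ins k π = ins k π * ins j π := ins_comm hjk π π
  rw [two_smul, SigmaIJ_eq, SigmaIJ_eq, SigmaIJ_eq]
  exact key_ring (ins i π) (ins j π) (ins k π) hb hbc
end

section
/- R(λ) = cos(λ/2)(cos(λ/2) P + sin(λ/2)·1⊗1) - sin(λ/2) C₁C₂ (sin(λ/2) P + cos(λ/2)·1⊗1). -/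
open TensorProduct

theorem R_half_angle_form (V : Type*) [AddCommGroup V] [Module ℂ V]
    [FiniteDimensional ℂ V] (π : Module.End ℂ V) (hπ : π * π = π) (lam : ℝ) :
    Rmat π lam
      = (Real.cos (lam/2) : ℂ) •
          ((Real.cos (lam/2) : ℂ) • flipMap V
            + (Real.sin (lam/2) : ℂ) • (1 : Module.End ℂ (V ⊗[ℂ] V)))
        - (Real.sin (lam/2) : ℂ) •
          (TensorProduct.map (π - (1 - π)) LinearMap.id *
            TensorProduct.map LinearMap.id (π - (1 - π)) *
            ((Real.sin (lam/2) : ℂ) • flipMap V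
              + (Real.cos (lam/2) : ℂ) • (1 : Module.End ℂ (V ⊗[ℂ] V)))) := by
  set s : ℂ := (Real.sin (lam/2) : ℂ) with hs
  set c : ℂ := (Real.cos (lam/2) : ℂ) with hc
  have hsc : s ^ 2 + c ^ 2 = 1 := by
    rw [hs, hc]
    norm_cast
    exact Real.sin_sq_add_cos_sq _
  have hsin : (Real.sin lam : ℂ) = 2 * s * c := by
    rw [hs, hc]
    norm_cast
    rw [show lam = 2 * (lam / 2) by ring, Real.sin_two_mul]
    ring
  have hcos : (Real.cos lam : ℂ) = c * c - s * s := by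
    rw [hs, hc]
    norm_cast
    rw [show lam = 2 * (lam / 2) by ring, Real.cos_two_mul']
    ring
  have hK : TensorProduct.map (π - (1 - π)) LinearMap.id *
      TensorProduct.map LinearMap.id (π - (1 - π))
      = 1 - (2 : ℂ) • SigmaOp π := by
    apply TensorProduct.ext'
    intro x y
    simp only [SigmaOp, Module.End.mul_apply, TensorProduct.map_tmul,
      LinearMap.sub_apply, Module.End.one_apply, LinearMap.id_apply,
      LinearMap.add_apply, LinearMap.smul_apply, Module.End.one_apply,
      map_sub, map_add, TensorProduct.sub_tmul, TensorProduct.tmul_sub, smul_sub, smul_add]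
    module
  rw [Rmat, hK, hsin, hcos]
  simp only [sub_mul, add_mul, mul_add, one_mul, mul_one, smul_add, smul_sub,
    smul_smul, smul_mul_assoc, mul_smul_comm]
  match_scalars <;> first
    | ring1
    | linear_combination hsc
    | linear_combination -hsc
    | linear_combination 2*hsc
    | linear_combination -2*hsc
end

section
/- The XX scattering matrix S₁₂(p₁,p₂) = e^{-ip₁} π° ⊗ π̄ + e^{ip₂} π̄ ⊗ π° - P₁₂(π° ⊗ π° + π̄ ⊗ π̄) satisfies the unitarity relation S₁₂(p₁,p₂) S₂₁(p₂,p₁) = 1 ⊗ 1, where S₂₁(p,q) = P₁₂ S₁₂(p,q) P₁₂. -/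
open TensorProduct

noncomputable def Smat {W : Type*} [AddCommGroup W] [Module ℂ W]
    (πb : Module.End ℂ W) (p q : ℝ) : Module.End ℂ (W ⊗[ℂ] W) :=
  Complex.exp (-(Complex.I * p)) • TensorProduct.map (1 - πb) πb
  + Complex.exp (Complex.I * q) • TensorProduct.map πb (1 - πb)
  - flipMap W * (TensorProduct.map (1 - πb) (1 - πb) + TensorProduct.map πb πb)


section Aux

variable {W : Type*} [AddCommGroup W] [Module ℂ W]

lemma mapMul (f g f' g' : Module.End ℂ W) :
    TensorProduct.map f g * TensorProduct.map f' g' = TensorProduct.map (f * f') (g * g') :=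
  (TensorProduct.map_mul f f' g g').symm

lemma flip_mul_map (f g : Module.End ℂ W) :
    flipMap W * TensorProduct.map f g = TensorProduct.map g f * flipMap W := by
  apply TensorProduct.ext'
  intro x y
  simp [flipMap, Module.End.mul_apply]

lemma flip_mul_flip : flipMap W * flipMap W = (1 : Module.End ℂ (W ⊗[ℂ] W)) := by
  apply TensorProduct.ext'
  intro x y
  simp [flipMap, Module.End.mul_apply]

end Aux

theorem S_unitarity (W : Type*) [AddCommGroup W] [Module ℂ W]
    [FiniteDimensional ℂ W] (πb : Module.End ℂ W) (hπb : πb * πb = πb)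
    (p1 p2 : ℝ) :
    Smat πb p1 p2 * (flipMap W * Smat πb p2 p1 * flipMap W)
      = (1 : Module.End ℂ (W ⊗[ℂ] W)) := by
  simp only [Smat]
  have h1 : (1 - πb) * (1 - πb) = 1 - πb := by
    rw [sub_mul, mul_sub, mul_sub, hπb]; simp
  have h2 : πb * (1 - πb) = 0 := by rw [mul_sub, hπb]; simp
  have h3 : (1 - πb) * πb = 0 := by rw [sub_mul, hπb]; simp
  set A := TensorProduct.map (1 - πb) πb with hA
  set B := TensorProduct.map πb (1 - πb) with hB
  set D := TensorProduct.map (1 - πb) (1 - πb) + TensorProduct.map πb πb with hD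
  set F := flipMap W with hF
  have hAA : A * A = A := by rw [hA, mapMul, h1, hπb]
  have hBB : B * B = B := by rw [hB, mapMul, hπb, h1]
  have hAB : A * B = 0 := by rw [hA, hB, mapMul, h3, h2]; simp
  have hBA : B * A = 0 := by rw [hA, hB, mapMul, h2, h3]; simp
  have hAD : A * D = 0 := by
    rw [hA, hD, mul_add, mapMul, mapMul, h1, h2, h3, hπb]; simp
  have hBD : B * D = 0 := by
    rw [hB, hD, mul_add, mapMul, mapMul, h2, h1, hπb, h3]; simp
  have hDA : D * A = 0 := by
    rw [hA, hD, add_mul, mapMul, mapMul, h1, h2, h3, hπb]; simp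
  have hDB : D * B = 0 := by
    rw [hB, hD, add_mul, mapMul, mapMul, h2, h1, hπb, h3]; simp
  have hDD : D * D = D := by
    rw [hD, add_mul, mul_add, mul_add, mapMul, mapMul, mapMul, mapMul,
      h1, h2, h3, hπb]
    simp
  have hFA : F * A = B * F := by rw [hA, hB, hF, flip_mul_map]
  have hFB : F * B = A * F := by rw [hA, hB, hF, flip_mul_map]
  have hFD : F * D = D * F := by
    rw [hD, hF, mul_add, add_mul, flip_mul_map, flip_mul_map]
  have hFF : F * F = 1 := flip_mul_flip
  -- "for all x" versions
  have hFA' : ∀ X, F * (A * X) = B * (F * X) := fun X => by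
    rw [← mul_assoc, hFA, mul_assoc]
  have hFB' : ∀ X, F * (B * X) = A * (F * X) := fun X => by
    rw [← mul_assoc, hFB, mul_assoc]
  have hFD' : ∀ X, F * (D * X) = D * (F * X) := fun X => by
    rw [← mul_assoc, hFD, mul_assoc]
  have hFF' : ∀ X, F * (F * X) = X := fun X => by
    rw [← mul_assoc, hFF, one_mul]
  have hAA' : ∀ X, A * (A * X) = A * X := fun X => by rw [← mul_assoc, hAA]
  have hBB' : ∀ X, B * (B * X) = B * X := fun X => by rw [← mul_assoc, hBB]
  have hAB' : ∀ X, A * (B * X) = 0 := fun X => by rw [← mul_assoc, hAB, zero_mul]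
  have hBA' : ∀ X, B * (A * X) = 0 := fun X => by rw [← mul_assoc, hBA, zero_mul]
  have hAD' : ∀ X, A * (D * X) = 0 := fun X => by rw [← mul_assoc, hAD, zero_mul]
  have hBD' : ∀ X, B * (D * X) = 0 := fun X => by rw [← mul_assoc, hBD, zero_mul]
  have hDA' : ∀ X, D * (A * X) = 0 := fun X => by rw [← mul_assoc, hDA, zero_mul]
  have hDB' : ∀ X, D * (B * X) = 0 := fun X => by rw [← mul_assoc, hDB, zero_mul]
  have hDD' : ∀ X, D * (D * X) = D * X := fun X => by rw [← mul_assoc, hDD]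
  have hSum : A + B + D = 1 := by
    rw [hA, hB, hD]
    apply TensorProduct.ext'
    intro x y
    simp [TensorProduct.sub_tmul, TensorProduct.tmul_sub, Module.End.mul_apply]
    abel
  have hexp1 : Complex.exp (-(Complex.I * p1)) * Complex.exp (Complex.I * p1) = 1 := by
    rw [← Complex.exp_add, neg_add_cancel, Complex.exp_zero]
  have hexp2 : Complex.exp (Complex.I * p2) * Complex.exp (-(Complex.I * p2)) = 1 := by
    rw [← Complex.exp_add, add_neg_cancel, Complex.exp_zero]
  have hexp1' : Complex.exp (Complex.I * p1) * Complex.exp (-(Complex.I * p1)) = 1 := by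
    rw [← Complex.exp_add, add_neg_cancel, Complex.exp_zero]
  have hexp2' : Complex.exp (-(Complex.I * p2)) * Complex.exp (Complex.I * p2) = 1 := by
    rw [← Complex.exp_add, neg_add_cancel, Complex.exp_zero]
  simp only [mul_add, add_mul, mul_sub, sub_mul, smul_mul_assoc, mul_smul_comm,
    mul_assoc, smul_smul,
    hFA, hFB, hFD, hFF, hFA', hFB', hFD', hFF',
    hAA, hBB, hAB, hBA, hAD, hBD, hDA, hDB, hDD,
    hAA', hBB', hAB', hBA', hAD', hBD', hDA', hDB', hDD',
    neg_smul, hexp1, hexp2, hexp1', hexp2', one_smul, smul_zero, mul_zero, zero_mul, mul_one, one_mul,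
    add_zero, zero_add, sub_zero, zero_sub, neg_zero, sub_neg_eq_add]
  rw [← hSum]
  abel
end

section
/- The braided scattering matrix Š₁₂(p₁,p₂) = P₁₂ S₁₂(p₁,p₂) satisfies the braided Yang–Baxter equation Š₂₃(p₁,p₂) Š₁₂(p₁,p₃) Š₂₃(p₂,p₃) = Š₁₂(p₂,p₃) Š₂₃(p₁,p₃) Š₁₂(p₁,p₂) and braided unitarity Š₁₂(p₁,p₂) Š₁₂(p₂,p₁) = 1. -/
open TensorProduct

section Aux
variable {W : Type*} [AddCommGroup W] [Module ℂ W] (πb : Module.End ℂ W)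

lemma aux_Sh01 (p q : ℝ) (u v : W) (hu : πb u = 0) (hv : πb v = v) :
    flipMap W ((Smat πb p q) (u ⊗ₜ v)) = Complex.exp (-(Complex.I * p)) • (v ⊗ₜ[ℂ] u) := by
  simp [Smat, flipMap, Module.End.mul_apply, TensorProduct.comm_tmul, hu, hv]

lemma aux_Sh10 (p q : ℝ) (u v : W) (hu : πb u = u) (hv : πb v = 0) :
    flipMap W ((Smat πb p q) (u ⊗ₜ v)) = Complex.exp (Complex.I * q) • (v ⊗ₜ[ℂ] u) := by
  simp [Smat, flipMap, Module.End.mul_apply, TensorProduct.comm_tmul, hu, hv]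

lemma aux_Sh11 (p q : ℝ) (u v : W) (hu : πb u = u) (hv : πb v = v) :
    flipMap W ((Smat πb p q) (u ⊗ₜ v)) = -(u ⊗ₜ[ℂ] v) := by
  simp [Smat, flipMap, Module.End.mul_apply, TensorProduct.comm_tmul, hu, hv]

lemma aux_Sh00 (p q : ℝ) (u v : W) (hu : πb u = 0) (hv : πb v = 0) :
    flipMap W ((Smat πb p q) (u ⊗ₜ v)) = -(u ⊗ₜ[ℂ] v) := by
  simp [Smat, flipMap, Module.End.mul_apply, TensorProduct.comm_tmul, hu, hv]

lemma aux_op23_apply (A : Module.End ℂ (W ⊗[ℂ] W)) (x : W) (w : W ⊗[ℂ] W) :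
    op23 A (x ⊗ₜ w) = x ⊗ₜ A w := by simp [op23]

lemma aux_op12_apply (A : Module.End ℂ (W ⊗[ℂ] W)) (x y z : W) :
    op12 A (x ⊗ₜ (y ⊗ₜ z)) = (TensorProduct.assoc ℂ W W W) (A (x ⊗ₜ y) ⊗ₜ z) := by
  simp [op12]

lemma aux_ext_homog (hπb : πb * πb = πb) (f g : Module.End ℂ (W ⊗[ℂ] (W ⊗[ℂ] W)))
    (h : ∀ x y z : W, (πb x = x ∨ πb x = 0) → (πb y = y ∨ πb y = 0) →
      (πb z = z ∨ πb z = 0) → f (x ⊗ₜ (y ⊗ₜ z)) = g (x ⊗ₜ (y ⊗ₜ z))) : f = g := by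
  have hp : ∀ x : W, πb (πb x) = πb x := fun x => by
    conv_lhs => rw [← Module.End.mul_apply, hπb]
  have hp' : ∀ x : W, πb (x - πb x) = 0 := fun x => by
    simp [map_sub, hp]
  apply TensorProduct.ext'
  intro x w
  induction w using TensorProduct.induction_on with
  | zero => simp
  | add a b ha hb => simp [tmul_add, map_add, ha, hb]
  | tmul y z =>
    have ex : x = πb x + (x - πb x) := by abel
    have ey : y = πb y + (y - πb y) := by abel
    have ez : z = πb z + (z - πb z) := by abel
    rw [ex, ey, ez]
    simp only [add_tmul, tmul_add, map_add]
    rw [h _ _ _ (Or.inl (hp x)) (Or.inl (hp y)) (Or.inl (hp z)),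
        h _ _ _ (Or.inl (hp x)) (Or.inl (hp y)) (Or.inr (hp' z)),
        h _ _ _ (Or.inl (hp x)) (Or.inr (hp' y)) (Or.inl (hp z)),
        h _ _ _ (Or.inl (hp x)) (Or.inr (hp' y)) (Or.inr (hp' z)),
        h _ _ _ (Or.inr (hp' x)) (Or.inl (hp y)) (Or.inl (hp z)),
        h _ _ _ (Or.inr (hp' x)) (Or.inl (hp y)) (Or.inr (hp' z)),
        h _ _ _ (Or.inr (hp' x)) (Or.inr (hp' y)) (Or.inl (hp z)),
        h _ _ _ (Or.inr (hp' x)) (Or.inr (hp' y)) (Or.inr (hp' z))]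

lemma aux_ext_homog2 (hπb : πb * πb = πb) (f g : Module.End ℂ (W ⊗[ℂ] W))
    (h : ∀ x y : W, (πb x = x ∨ πb x = 0) → (πb y = y ∨ πb y = 0) →
      f (x ⊗ₜ y) = g (x ⊗ₜ y)) : f = g := by
  have hp : ∀ x : W, πb (πb x) = πb x := fun x => by
    conv_lhs => rw [← Module.End.mul_apply, hπb]
  have hp' : ∀ x : W, πb (x - πb x) = 0 := fun x => by
    simp [map_sub, hp]
  apply TensorProduct.ext'
  intro x y
  have ex : x = πb x + (x - πb x) := by abel
  have ey : y = πb y + (y - πb y) := by abel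
  rw [ex, ey]
  simp only [add_tmul, tmul_add, map_add]
  rw [h _ _ (Or.inl (hp x)) (Or.inl (hp y)),
      h _ _ (Or.inl (hp x)) (Or.inr (hp' y)),
      h _ _ (Or.inr (hp' x)) (Or.inl (hp y)),
      h _ _ (Or.inr (hp' x)) (Or.inr (hp' y))]

end Aux

theorem braided_S_YBE_and_unitarity (W : Type*) [AddCommGroup W] [Module ℂ W]
    [FiniteDimensional ℂ W] (πb : Module.End ℂ W) (hπb : πb * πb = πb)
    (p1 p2 p3 : ℝ) :
    op23 (flipMap W * Smat πb p1 p2) * op12 (flipMap W * Smat πb p1 p3) *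
        op23 (flipMap W * Smat πb p2 p3)
      = op12 (flipMap W * Smat πb p2 p3) * op23 (flipMap W * Smat πb p1 p3) *
          op12 (flipMap W * Smat πb p1 p2) ∧
    (flipMap W * Smat πb p1 p2) * (flipMap W * Smat πb p2 p1)
      = (1 : Module.End ℂ (W ⊗[ℂ] W)) := by
  constructor
  · apply aux_ext_homog πb hπb
    intro x y z hx hy hz
    rcases hx with hx | hx <;> rcases hy with hy | hy <;> rcases hz with hz | hz <;>
    · simp only [Module.End.mul_apply, aux_op23_apply, aux_op12_apply,
        aux_Sh00, aux_Sh01, aux_Sh10, aux_Sh11, hx, hy, hz,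
        map_smul, map_neg, ← TensorProduct.smul_tmul', tmul_smul, neg_tmul, tmul_neg,
        TensorProduct.assoc_tmul, smul_smul, smul_neg, neg_neg]
      try rw [← Complex.exp_add, ← Complex.exp_add]
      try ring_nf
  · apply aux_ext_homog2 πb hπb
    intro x y hx hy
    rcases hx with hx | hx <;> rcases hy with hy | hy <;>
    · simp only [Module.End.mul_apply, Module.End.one_apply,
        aux_Sh00, aux_Sh01, aux_Sh10, aux_Sh11, hx, hy,
        map_smul, map_neg, smul_smul, smul_neg, neg_neg, ← Complex.exp_add]
      try ring_nf
      try simp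
end
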